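/- arXiv:math/0604182 — 3 statements merged into one kernel-verified Lean document; each statement's English description precedes it below -/
import Mathlib

section
/- Let C ≥ 1 be an integer and let B̂ : ℝ → ℝ be the Laplace–Stieltjes transform of a probability distribution B on [0,∞), i.e. B̂(s) = ∫₀^∞ e^{-sx} dB(x). Fix μ > 0 and suppose the mean interarrival time a = ∫₀^∞ x dB(x) satisfies 1/(aμC) < 1 (i.e. aμC > 1) and B is not concentrated at 0. Then the equation z = B̂(μ - μ z^C) has exactly one root in the open interval (0,1). -/
/-!
Write `Φ z = B̂(μ - μ z^C)`. Since `B̂` is strictly convex and decreasing on `[0, ∞)` and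
`z ↦ μ - μ z^C` is concave and injective on `[0, 1]`, `Φ` is strictly convex on `[0, 1]`, with
`Φ 0 > 0` and `Φ 1 = 1`. By Fatou's lemma the left difference quotients `(1 - Φ z) / (1 - z)`
cannot all stay `≤ 1` when `a μ C > 1`, so `Φ w < w` for some `w < 1` and the intermediate value
theorem gives a root in `(0, w)`. A strictly convex function meets the diagonal at most twice, and
`1` is already one of these points.
-/

open MeasureTheory Set Filter Topology

section Integral

variable {α E : Type*} [MeasurableSpace α] {ν : Measure α} [AddCommGroup E] [Module ℝ E]

theorem integral_lt_integral_of_ae_le_of_measure_ne_zero {f g : α → ℝ} {t : Set α}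
    (hf : Integrable f ν) (hg : Integrable g ν) (hle : f ≤ᵐ[ν] g) (hlt : ∀ x ∈ t, f x < g x)
    (ht : ν t ≠ 0) : ∫ x, f x ∂ν < ∫ x, g x ∂ν := by
  rw [← sub_pos, ← integral_sub hg hf, integral_pos_iff_support_of_nonneg_ae
    (hle.mono fun x hx => sub_nonneg.2 hx) (hg.sub hf)]
  exact pos_iff_ne_zero.2 fun h =>
    ht (measure_mono_null (fun x hx => (sub_pos.2 (hlt x hx)).ne') h)

theorem strictConvexOn_integral {s : Set E} {t : Set α} {F : E → α → ℝ} (hs : Convex ℝ s)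
    (hint : ∀ z ∈ s, Integrable (F z) ν) (hconv : ∀ᵐ x ∂ν, ConvexOn ℝ s (F · x))
    (hstrict : ∀ x ∈ t, StrictConvexOn ℝ s (F · x)) (ht : ν t ≠ 0) :
    StrictConvexOn ℝ s (fun z => ∫ x, F z x ∂ν) := by
  refine ⟨hs, fun z hz w hw hzw a b ha hb hab => ?_⟩
  have hFz := (hint z hz).const_mul a
  have hFw := (hint w hw).const_mul b
  calc ∫ x, F (a • z + b • w) x ∂ν < ∫ x, a * F z x + b * F w x ∂ν := by
        refine integral_lt_integral_of_ae_le_of_measure_ne_zero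
          (hint _ (hs hz hw ha.le hb.le hab)) (hFz.add hFw) ?_
          (fun x hx => (hstrict x hx).2 hz hw hzw ha hb hab) ht
        filter_upwards [hconv] with x hx using hx.2 hz hw ha.le hb.le hab
    _ = a • ∫ x, F z x ∂ν + b • ∫ x, F w x ∂ν := by
        rw [integral_add hFz hFw, integral_const_mul, integral_const_mul, smul_eq_mul, smul_eq_mul]

theorem integral_le_of_tendsto_of_eventually_integral_le {ι : Type*} {l : Filter ι}
    [l.IsCountablyGenerated] [l.NeBot] {g : ι → α → ℝ} {f : α → ℝ} {c : ℝ}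
    (hg_meas : ∀ i, AEMeasurable (g i) ν) (hg_nonneg : ∀ᶠ i in l, 0 ≤ᵐ[ν] g i)
    (hg_int : ∀ᶠ i in l, Integrable (g i) ν) (hg_le : ∀ᶠ i in l, ∫ x, g i x ∂ν ≤ c)
    (hlim : ∀ᵐ x ∂ν, Tendsto (g · x) l (𝓝 (f x))) (hf_nonneg : 0 ≤ᵐ[ν] f) :
    ∫ x, f x ∂ν ≤ c := by
  obtain ⟨i, hi_nonneg, hi_le⟩ := (hg_nonneg.and hg_le).exists
  have hc : 0 ≤ c := (integral_nonneg_of_ae hi_nonneg).trans hi_le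
  by_cases hf : Integrable f ν
  swap
  · rwa [integral_undef hf]
  rw [← ENNReal.ofReal_le_ofReal_iff hc, ofReal_integral_eq_lintegral_ofReal hf hf_nonneg]
  calc ∫⁻ x, ENNReal.ofReal (f x) ∂ν
      = ∫⁻ x, liminf (fun i => ENNReal.ofReal (g i x)) l ∂ν := by
        refine lintegral_congr_ae ?_
        filter_upwards [hlim] with x hx
        exact ((ENNReal.continuous_ofReal.tendsto _).comp hx).liminf_eq.symm
    _ ≤ liminf (fun i => ∫⁻ x, ENNReal.ofReal (g i x) ∂ν) l :=
        lintegral_liminf_le' fun i => (hg_meas i).ennreal_ofReal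
    _ ≤ ENNReal.ofReal c := by
        refine liminf_le_of_frequently_le' (Eventually.frequently ?_)
        filter_upwards [hg_nonneg, hg_int, hg_le] with i hi_nonneg hi_int hi_le
        rw [← ofReal_integral_eq_lintegral_ofReal hi_int hi_nonneg]
        exact ENNReal.ofReal_le_ofReal hi_le

end Integral

theorem StrictConvexOn.apply_lt_self {s : Set ℝ} {f : ℝ → ℝ} (hf : StrictConvexOn ℝ s f)
    {x y z : ℝ} (hx : x ∈ s) (hz : z ∈ s) (hxy : x < y) (hyz : y < z) (hfx : f x ≤ x)
    (hfz : f z ≤ z) : f y < y := by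
  have hslope := hf.slope_strict_mono_adjacent hx hz hxy hyz
  rw [div_lt_div_iff₀ (sub_pos.2 hxy) (sub_pos.2 hyz)] at hslope
  by_contra! hfy
  nlinarith [mul_le_mul_of_nonneg_right (by linarith : f y - f x ≥ y - x) (sub_pos.2 hyz).le,
    mul_le_mul_of_nonneg_right (by linarith : f z - f y ≤ z - y) (sub_pos.2 hxy).le]

theorem StrictConvexOn.eq_of_isFixedPt {s : Set ℝ} {f : ℝ → ℝ} (hf : StrictConvexOn ℝ s f)
    {x y z : ℝ} (hx : x ∈ s) (hy : y ∈ s) (hz : z ∈ s) (hxz : x < z) (hyz : y < z)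
    (hfx : Function.IsFixedPt f x) (hfy : Function.IsFixedPt f y)
    (hfz : Function.IsFixedPt f z) : x = y := by
  rcases lt_trichotomy x y with hxy | rfl | hyx
  · exact absurd hfy (hf.apply_lt_self hx hz hxy hyz hfx.le hfz.le).ne
  · rfl
  · exact absurd hfx (hf.apply_lt_self hy hz hyx hxz hfy.le hfz.le).ne

theorem strictConvexOn_exp_neg_mul {x : ℝ} (hx : x ≠ 0) :
    StrictConvexOn ℝ univ (fun s => Real.exp (-s * x)) := by
  refine ⟨convex_univ, fun s _ t _ hst a b ha hb hab => ?_⟩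
  have hne : -s * x ≠ -t * x := fun h => hst (by simpa [hx] using h)
  convert strictConvexOn_exp.2 (mem_univ _) (mem_univ _) hne ha hb hab using 2
  simp only [smul_eq_mul]
  ring

theorem convexOn_exp_neg_mul (x : ℝ) : ConvexOn ℝ univ (fun s => Real.exp (-s * x)) := by
  rcases eq_or_ne x 0 with rfl | hx
  · simpa using convexOn_const (1 : ℝ) convex_univ
  · exact (strictConvexOn_exp_neg_mul hx).convexOn

noncomputable def laplaceStieltjes (B : Measure ℝ) (s : ℝ) : ℝ :=
  ∫ x, Real.exp (-s * x) ∂B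

section LaplaceStieltjes

variable {B : Measure ℝ} {s : ℝ}

theorem exp_neg_mul_le_one {x : ℝ} (hs : 0 ≤ s) (hx : 0 ≤ x) : Real.exp (-s * x) ≤ 1 :=
  Real.exp_le_one_iff.2 (by nlinarith)

theorem integrable_exp_neg_mul [IsFiniteMeasure B] (hB : ∀ᵐ x ∂B, 0 ≤ x) (hs : 0 ≤ s) :
    Integrable (fun x => Real.exp (-s * x)) B := by
  refine (integrable_const (1 : ℝ)).mono' (by fun_prop) ?_
  filter_upwards [hB] with x hx
  rw [Real.norm_of_nonneg (Real.exp_pos _).le]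
  exact exp_neg_mul_le_one hs hx

theorem laplaceStieltjes_zero [IsProbabilityMeasure B] : laplaceStieltjes B 0 = 1 := by
  simp [laplaceStieltjes]

theorem laplaceStieltjes_pos [IsProbabilityMeasure B] (hB : ∀ᵐ x ∂B, 0 ≤ x) (hs : 0 ≤ s) :
    0 < laplaceStieltjes B s :=
  integral_exp_pos (integrable_exp_neg_mul hB hs)

theorem continuousOn_laplaceStieltjes [IsFiniteMeasure B] (hB : ∀ᵐ x ∂B, 0 ≤ x) :
    ContinuousOn (laplaceStieltjes B) (Ici 0) := by
  refine continuousOn_of_dominated (bound := fun _ => 1) (fun _ _ => by fun_prop)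
    (fun s hs => ?_) (integrable_const 1) (ae_of_all _ fun _ => by fun_prop)
  filter_upwards [hB] with x hx
  rw [Real.norm_of_nonneg (Real.exp_pos _).le]
  exact exp_neg_mul_le_one hs hx

theorem antitoneOn_laplaceStieltjes [IsFiniteMeasure B] (hB : ∀ᵐ x ∂B, 0 ≤ x) :
    AntitoneOn (laplaceStieltjes B) (Ici 0) := fun s hs t ht hst => by
  refine integral_mono_ae (integrable_exp_neg_mul hB ht) (integrable_exp_neg_mul hB hs) ?_
  filter_upwards [hB] with x hx
  exact Real.exp_le_exp.2 (by nlinarith)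

theorem strictConvexOn_laplaceStieltjes [IsFiniteMeasure B] (hB : ∀ᵐ x ∂B, 0 ≤ x)
    (hB0 : B {0}ᶜ ≠ 0) : StrictConvexOn ℝ (Ici 0) (laplaceStieltjes B) :=
  strictConvexOn_integral (convex_Ici 0) (fun _ hs => integrable_exp_neg_mul hB hs)
    (ae_of_all _ fun x => (convexOn_exp_neg_mul x).subset (subset_univ _) (convex_Ici 0))
    (fun _ hx => (strictConvexOn_exp_neg_mul hx).subset (subset_univ _) (convex_Ici 0)) hB0

end LaplaceStieltjes

section BatchService

variable {B : Measure ℝ} {C : ℕ} {μ : ℝ}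

theorem mapsTo_sub_mul_pow (hμ : 0 ≤ μ) :
    MapsTo (fun z : ℝ => μ - μ * z ^ C) (Icc 0 1) (Ici 0) := fun z hz => by
  have : z ^ C ≤ 1 := pow_le_one₀ hz.1 hz.2
  show 0 ≤ μ - μ * z ^ C
  nlinarith

theorem concaveOn_sub_mul_pow (hμ : 0 ≤ μ) :
    ConcaveOn ℝ (Icc 0 1) (fun z : ℝ => μ - μ * z ^ C) :=
  (concaveOn_const μ (convex_Icc 0 1)).sub
    (((convexOn_pow C).subset Icc_subset_Ici_self (convex_Icc 0 1)).smul hμ)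

theorem injOn_sub_mul_pow (hμ : μ ≠ 0) (hC : C ≠ 0) :
    InjOn (fun z : ℝ => μ - μ * z ^ C) (Icc 0 1) := fun _ hz _ hw h =>
  (pow_left_strictMonoOn₀ hC).injOn hz.1 hw.1
    (mul_left_cancel₀ hμ (sub_right_injective h))

theorem strictConvexOn_laplaceStieltjes_sub_mul_pow [IsFiniteMeasure B]
    (hB : ∀ᵐ x ∂B, 0 ≤ x) (hB0 : B {0}ᶜ ≠ 0) (hμ : 0 < μ) (hC : C ≠ 0) :
    StrictConvexOn ℝ (Icc 0 1) (fun z => laplaceStieltjes B (μ - μ * z ^ C)) := by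
  have himage : (fun z : ℝ => μ - μ * z ^ C) '' Icc 0 1 ⊆ Ici 0 :=
    (mapsTo_sub_mul_pow hμ.le).image_subset
  have hconvex : Convex ℝ ((fun z : ℝ => μ - μ * z ^ C) '' Icc 0 1) :=
    (isPreconnected_Icc.image _ (by fun_prop)).convex
  exact ((strictConvexOn_laplaceStieltjes hB hB0).subset himage hconvex).comp_concaveOn
    (concaveOn_sub_mul_pow hμ.le) ((antitoneOn_laplaceStieltjes hB).mono himage)
    (injOn_sub_mul_pow hμ.ne' hC)

theorem hasDerivAt_exp_neg_sub_mul_pow (C : ℕ) (μ x : ℝ) :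
    HasDerivAt (fun z : ℝ => Real.exp (-(μ - μ * z ^ C) * x)) (μ * C * x) 1 := by
  have h := (((hasDerivAt_pow C (1 : ℝ)).const_mul μ).const_sub μ).neg.mul_const x
  simpa using h.exp

theorem exists_laplaceStieltjes_sub_mul_pow_lt_self [IsProbabilityMeasure B]
    (hB : ∀ᵐ x ∂B, 0 ≤ x) (hμ : 0 < μ) (hstab : 1 < (∫ x, x ∂B) * μ * C) :
    ∃ w ∈ Ioo (0 : ℝ) 1, laplaceStieltjes B (μ - μ * w ^ C) < w := by
  by_contra! hle
  set g : ℝ → ℝ → ℝ := fun z x => (1 - Real.exp (-(μ - μ * z ^ C) * x)) / (1 - z)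
  have hIoo : ∀ᶠ z in 𝓝[<] (1 : ℝ), z ∈ Ioo 0 1 := Ioo_mem_nhdsLT zero_lt_one
  have hs : ∀ z ∈ Ioo (0 : ℝ) 1, 0 ≤ μ - μ * z ^ C := fun z hz =>
    mapsTo_sub_mul_pow hμ.le (Ioo_subset_Icc_self hz)
  have hint : ∀ z ∈ Ioo (0 : ℝ) 1, Integrable (g z) B := fun z hz =>
    ((integrable_const 1).sub (integrable_exp_neg_mul hB (hs z hz))).div_const _
  have hlim : ∀ x, Tendsto (g · x) (𝓝[<] 1) (𝓝 (μ * C * x)) := fun x => by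
    refine ((hasDerivWithinAt_iff_tendsto_slope' (s := Iio 1) self_notMem_Iio).1
      (hasDerivAt_exp_neg_sub_mul_pow C μ x).hasDerivWithinAt).congr fun z => ?_
    simp only [slope_def_field, g]
    rw [← neg_div_neg_eq]
    simp
  have hmean := integral_le_of_tendsto_of_eventually_integral_le (c := 1)
    (fun z => by fun_prop)
    (hIoo.mono fun z hz => by
      filter_upwards [hB] with x hx
      exact div_nonneg (sub_nonneg.2 (exp_neg_mul_le_one (hs z hz) hx)) (sub_pos.2 hz.2).le)
    (hIoo.mono hint)
    (hIoo.mono fun z hz => by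
      rw [integral_div, integral_sub (integrable_const 1) (integrable_exp_neg_mul hB (hs z hz)),
        div_le_one (sub_pos.2 hz.2), integral_const, probReal_univ, smul_eq_mul, mul_one]
      exact sub_le_sub_left (hle z hz) 1)
    (ae_of_all _ hlim)
    (by filter_upwards [hB] with x hx using by positivity)
  rw [integral_const_mul] at hmean
  linarith

end BatchService

/-- Uniqueness of the root in (0,1) of z = B̂(μ - μ z^C) for the GI/M^C/1 queue. -/
theorem gim_c_1_fixed_point_unique
    (C : ℕ) (hC : 1 ≤ C) (B : Measure ℝ) [IsProbabilityMeasure B]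
    (hsupp : B (Set.Iio 0) = 0) (μ : ℝ) (hμ : 0 < μ)
    (a : ℝ) (ha : a = ∫ x, x ∂B) (hstab : 1 < a * μ * C)
    (hnot0 : B {0} < 1) :
    ∃! z : ℝ, z ∈ Set.Ioo (0:ℝ) 1 ∧ z = ∫ x, Real.exp (-(μ - μ * z ^ C) * x) ∂B := by
  have hB : ∀ᵐ x ∂B, 0 ≤ x :=
    ae_iff.2 (measure_mono_null (fun _ hx => mem_Iio.2 (not_le.1 hx)) hsupp)
  have hB0 : B {0}ᶜ ≠ 0 := by
    rw [prob_compl_eq_one_sub (measurableSet_singleton 0)]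
    exact (tsub_pos_of_lt hnot0).ne'
  set Φ : ℝ → ℝ := fun z => laplaceStieltjes B (μ - μ * z ^ C)
  have hΦ_convex : StrictConvexOn ℝ (Icc 0 1) Φ :=
    strictConvexOn_laplaceStieltjes_sub_mul_pow hB hB0 hμ (by omega)
  have hΦ_cont : ContinuousOn Φ (Icc 0 1) :=
    (continuousOn_laplaceStieltjes hB).comp (by fun_prop) (mapsTo_sub_mul_pow hμ.le)
  have hΦ0 : 0 < Φ 0 := laplaceStieltjes_pos hB (mapsTo_sub_mul_pow hμ.le ⟨le_rfl, zero_le_one⟩)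
  have hΦ1 : Φ 1 = 1 := by simp [Φ, laplaceStieltjes_zero]
  obtain ⟨w, hw, hΦw⟩ : ∃ w ∈ Ioo (0 : ℝ) 1, Φ w < w :=
    exists_laplaceStieltjes_sub_mul_pow_lt_self hB hμ (ha ▸ hstab)
  obtain ⟨r, hr, hΦr⟩ : ∃ r ∈ Icc 0 w, Φ r - r = 0 :=
    intermediate_value_Icc' hw.1.le
      ((hΦ_cont.mono (Icc_subset_Icc_right hw.2.le)).sub continuousOn_id)
      ⟨show Φ w - w ≤ 0 by linarith, show 0 ≤ Φ 0 - 0 by linarith⟩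
  have hr_pos : 0 < r := hr.1.lt_of_ne (by rintro rfl; linarith)
  have hr_mem : r ∈ Ioo (0 : ℝ) 1 := ⟨hr_pos, hr.2.trans_lt hw.2⟩
  refine ⟨r, ⟨hr_mem, (sub_eq_zero.1 hΦr).symm⟩, fun y ⟨hy, hy_fix⟩ => ?_⟩
  exact hΦ_convex.eq_of_isFixedPt (Ioo_subset_Icc_self hy) (Ioo_subset_Icc_self hr_mem)
    (right_mem_Icc.2 zero_le_one) hy.2 hr_mem.2 hy_fix.symm (sub_eq_zero.1 hΦr) hΦ1
end

section
/- Let a, d : ℕ → ℕ be sequences of nonnegative increments such that for each n at most one of a(n), d(n) is nonzero (disjoint jumps), and let C be a positive integer with d(n) ∈ {0, C} for all n. Define Q : ℕ → ℕ by Q(0) = 0 and Q(n) = max(0, Q(n−1) + a(n) − d(n)). Then for all n, Q(n) = ∑_{m=1}^{n} a(m) − ∑_{m=1}^{n} ∑_{j=1}^{C} [Q(m−1) ≥ j]·[d(m) = C], where [·] denotes the 0/1 indicator. -/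
lemma lindley_aux_count (q : ℤ) (hq : 0 ≤ q) (C : ℕ) :
    ∑ j ∈ Finset.range C, (if (j : ℤ) + 1 ≤ q then (1:ℤ) else 0) = min q C := by
  induction C with
  | zero => simp; omega
  | succ n ih =>
      rw [Finset.sum_range_succ, ih]
      push_cast
      split <;> omega

/-- Discrete-time version of Lemma 1: the Lindley recursion with departure jumps
of size C equals the sum (integral) representation. -/
theorem lindley_sum_representation
    (C : ℕ) (hC : 1 ≤ C) (a d : ℕ → ℕ)
    (hdisj : ∀ n, a n = 0 ∨ d n = 0)
    (hd : ∀ n, d n = 0 ∨ d n = C)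
    (Q : ℕ → ℤ) (hQ0 : Q 0 = 0)
    (hQ : ∀ n, Q (n + 1) = max 0 (Q n + a (n + 1) - d (n + 1))) :
    ∀ n, Q n = (∑ m ∈ Finset.range n, (a (m + 1) : ℤ)) -
      ∑ m ∈ Finset.range n, ∑ j ∈ Finset.range C,
        (if ((j : ℤ) + 1 ≤ Q m ∧ d (m + 1) = C) then (1:ℤ) else 0) := by
  have hQnn : ∀ n, 0 ≤ Q n := by
    intro n
    cases n with
    | zero => rw [hQ0]
    | succ k => rw [hQ k]; exact le_max_left _ _
  intro n
  induction n with
  | zero => simpa using hQ0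
  | succ n ih =>
      rw [Finset.sum_range_succ, Finset.sum_range_succ, hQ n]
      rcases hd (n + 1) with h0 | hc
      · have hne : d (n + 1) ≠ C := by omega
        have : ∑ j ∈ Finset.range C,
            (if ((j : ℤ) + 1 ≤ Q n ∧ d (n + 1) = C) then (1:ℤ) else 0) = 0 := by
          apply Finset.sum_eq_zero
          intro j _
          simp [hne]
        rw [this, h0]
        have := hQnn n
        have hmax : max 0 (Q n + (a (n+1) : ℤ) - (0:ℕ)) = Q n + (a (n+1) : ℤ) := by
          push_cast
          rw [max_eq_right (by omega)]; ring
        push_cast at hmax ⊢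
        omega
      · have ha : a (n + 1) = 0 := by
          rcases hdisj (n + 1) with h | h
          · exact h
          · omega
        have : ∑ j ∈ Finset.range C,
            (if ((j : ℤ) + 1 ≤ Q n ∧ d (n + 1) = C) then (1:ℤ) else 0) = min (Q n) C := by
          rw [← lindley_aux_count (Q n) (hQnn n) C]
          apply Finset.sum_congr rfl
          intro j _
          simp [hc]
        rw [this, ha, hc]
        have := hQnn n
        rcases le_or_gt (Q n + (0:ℕ) - (C:ℤ)) 0 with h | h
        · rw [max_eq_left h]
          push_cast at h ⊢
          omega
        · rw [max_eq_right h.le]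
          push_cast at h ⊢
          omega
end

section
/- Let a⁽¹⁾, a⁽²⁾, d : ℕ → ℕ with d(n) ∈ {0, C} and jumps disjoint (for each n at most one of a⁽¹⁾(n), a⁽²⁾(n), d(n) is nonzero). Define Q⁽¹⁾(n) = max(0, Q⁽¹⁾(n−1) + a⁽¹⁾(n) − d(n)) with Q⁽¹⁾(0)=0, and Q⁽²⁾(n) = max(0, Q⁽²⁾(n−1) + a⁽²⁾(n) − (d(n) − Q⁽¹⁾(n−1))·[Q⁽¹⁾(n) = 0]) with Q⁽²⁾(0)=0, where x·[·] uses the 0/1 indicator and the subtraction is truncated at 0. Then the sum Q₂(n) = Q⁽¹⁾(n) + Q⁽²⁾(n) satisfies Q₂(n) = max(0, Q₂(n−1) + a⁽¹⁾(n) + a⁽²⁾(n) − d(n)) for all n. -/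
/-- Discrete-time version of Lemma 1 for two priority classes: the cumulative
buffer content follows a single-class Lindley recursion. -/
theorem two_priority_cumulative_lindley
    (C : ℕ) (hC : 1 ≤ C) (a1 a2 d : ℕ → ℕ)
    (hd : ∀ n, d n = 0 ∨ d n = C)
    (hdisj : ∀ n, (a1 n ≠ 0 → a2 n = 0 ∧ d n = 0) ∧
                  (a2 n ≠ 0 → a1 n = 0 ∧ d n = 0) ∧
                  (d n ≠ 0 → a1 n = 0 ∧ a2 n = 0))
    (Q1 Q2 : ℕ → ℤ) (hQ10 : Q1 0 = 0) (hQ20 : Q2 0 = 0)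
    (hQ1 : ∀ n, Q1 (n + 1) = max 0 (Q1 n + a1 (n + 1) - d (n + 1)))
    (hQ2 : ∀ n, Q2 (n + 1) = max 0 (Q2 n + a2 (n + 1) -
      (if Q1 (n + 1) = 0 then max 0 ((d (n + 1) : ℤ) - Q1 n) else 0))) :
    ∀ n, Q1 (n + 1) + Q2 (n + 1) =
      max 0 (Q1 n + Q2 n + a1 (n + 1) + a2 (n + 1) - d (n + 1)) := by
  have h1nn : ∀ n, 0 ≤ Q1 n := by
    intro n
    cases n with
    | zero => simp [hQ10]
    | succ m => rw [hQ1]; exact le_max_left _ _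
  have h2nn : ∀ n, 0 ≤ Q2 n := by
    intro n
    cases n with
    | zero => simp [hQ20]
    | succ m => rw [hQ2]; exact le_max_left _ _
  intro n
  have h1 := hQ1 n
  have h2 := hQ2 n
  have h1n := h1nn n
  have h2n := h2nn n
  rcases eq_or_ne (d (n + 1)) 0 with hD | hD
  · -- no departure
    have hQ1v : Q1 (n + 1) = Q1 n + a1 (n + 1) := by
      rw [h1, hD]; push_cast; omega
    have hdep : (if Q1 (n + 1) = 0 then max 0 ((d (n + 1) : ℤ) - Q1 n) else 0) = 0 := by
      rw [hD]
      split <;> omega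
    rw [h2, hdep, hQ1v, hD]
    push_cast
    omega
  · -- departure, so a1 = a2 = 0
    obtain ⟨hA1, hA2⟩ := (hdisj (n + 1)).2.2 hD
    rw [hA1] at h1 ⊢
    rw [hA2] at h2 ⊢
    push_cast at h1 h2 ⊢
    rcases le_or_gt (d (n + 1) : ℤ) (Q1 n) with hle | hlt
    · have hQ1v : Q1 (n + 1) = Q1 n - d (n + 1) := by rw [h1]; omega
      have hdep : (if Q1 (n + 1) = 0 then max 0 ((d (n + 1) : ℤ) - Q1 n) else 0) = 0 := by
        split <;> omega
      rw [h2, hdep, hQ1v]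
      omega
    · have hQ1v : Q1 (n + 1) = 0 := by rw [h1]; omega
      rw [h2, hQ1v, if_pos rfl]
      have : max 0 ((d (n + 1) : ℤ) - Q1 n) = (d (n + 1) : ℤ) - Q1 n := by omega
      rw [this]
      omega
end
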